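/- arXiv:2307.05659 — 8 statements merged into one kernel-verified Lean document; each statement's English description precedes it below -/
import Mathlib

section
/- Define P₁ on the four atoms of the algebra generated by A, B by P₁(A∧B)=25/36, P₁(A∧¬B)=P₁(¬A∧B)=5/36, P₁(¬A∧¬B)=1/36, and P₂ by P₂(A∧B)=27/36, P₂(A∧¬B)=P₂(¬A∧B)=4/36, P₂(¬A∧¬B)=1/36. Then P₁(A∧B) = P₁(A)·P₁(B) (A and B are independent under P₁) while P₂(A∧B) ≠ P₂(A)·P₂(B), yet both measures induce the same weak order on all 16 Boolean combinations of A and B. -/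
/-!
Both weight vectors are lexicographic: the atom `A ∧ B` outweighs the three others together, the
two atoms `A ∧ ¬B` and `¬A ∧ B` weigh the same, and each outweighs `¬A ∧ ¬B`. Hence each measure
compares events lexicographically by (whether they contain `A ∧ B`, how many of the two mixed atoms
they contain, whether they contain `¬A ∧ ¬B`), so the two orders coincide; independence is a direct
computation.
-/

/-- Atom weights of the first measure. -/
noncomputable def w₁ : Bool × Bool → ℝ := fun p =>
  if p.1 then (if p.2 then 25/36 else 5/36) else (if p.2 then 5/36 else 1/36)

/-- Atom weights of the second measure. -/
noncomputable def w₂ : Bool × Bool → ℝ := fun p =>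
  if p.1 then (if p.2 then 27/36 else 4/36) else (if p.2 then 4/36 else 1/36)

/-- The measure of an event (a set of atoms) given atom weights. -/
noncomputable def Pr (w : Bool × Bool → ℝ) (S : Finset (Bool × Bool)) : ℝ := ∑ x ∈ S, w x

/-- The event A. -/
def Aev : Finset (Bool × Bool) := Finset.univ.filter (fun p => p.1 = true)

/-- The event B. -/
def Bev : Finset (Bool × Bool) := Finset.univ.filter (fun p => p.2 = true)

theorem mul_add_le_mul_add_iff {R : Type*} [CommRing R] [LinearOrder R] [IsStrictOrderedRing R]
    {α r r' : R} {a a' : ℕ} (hr : 0 ≤ r) (hrα : r < α) (hr' : 0 ≤ r') (hr'α : r' < α) :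
    α * a + r ≤ α * a' + r' ↔ a < a' ∨ a = a' ∧ r ≤ r' := by
  have hα : 0 ≤ α := hr.trans hrα.le
  constructor
  · intro h
    rcases lt_trichotomy a a' with hlt | rfl | hgt
    · exact .inl hlt
    · exact .inr ⟨rfl, by simpa using h⟩
    · have : α * (a' + 1 : R) ≤ α * a := mul_le_mul_of_nonneg_left (by exact_mod_cast hgt) hα
      rw [mul_add_one] at this
      linarith
  · rintro (hlt | ⟨rfl, hle⟩)
    · have : α * (a + 1 : R) ≤ α * a' := mul_le_mul_of_nonneg_left (by exact_mod_cast hlt) hα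
      rw [mul_add_one] at this
      linarith
    · simpa using hle

def memInd (x : Bool × Bool) (S : Finset (Bool × Bool)) : ℕ := if x ∈ S then 1 else 0

theorem memInd_le_one (x : Bool × Bool) (S : Finset (Bool × Bool)) : memInd x S ≤ 1 := by
  unfold memInd; split_ifs <;> simp

def lexKey (S : Finset (Bool × Bool)) : ℕ ×ₗ ℕ ×ₗ ℕ :=
  toLex (memInd (true, true) S,
    toLex (memInd (true, false) S + memInd (false, true) S, memInd (false, false) S))

structure IsLexWeight (w : Bool × Bool → ℝ) : Prop where
  symm : w (true, false) = w (false, true)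
  pos : 0 < w (false, false)
  lt_mixed : w (false, false) < w (true, false)
  lt_top : 2 * w (true, false) + w (false, false) < w (true, true)

theorem Pr_eq_sum_memInd (w : Bool × Bool → ℝ) (S : Finset (Bool × Bool)) :
    Pr w S = ∑ x, w x * memInd x S := by
  simp [Pr, memInd]

theorem Pr_eq_of_symm {w : Bool × Bool → ℝ} (hw : w (true, false) = w (false, true))
    (S : Finset (Bool × Bool)) :
    Pr w S = w (true, true) * memInd (true, true) S +
      (w (true, false) * ↑(memInd (true, false) S + memInd (false, true) S) +
        w (false, false) * memInd (false, false) S) := by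
  rw [Pr_eq_sum_memInd, Fintype.sum_prod_type]
  simp only [Fintype.sum_bool, hw]
  push_cast
  ring

namespace IsLexWeight
variable {w : Bool × Bool → ℝ}

theorem mixed_pos (hw : IsLexWeight w) : 0 < w (true, false) := hw.pos.trans hw.lt_mixed

theorem remainder_bounds (hw : IsLexWeight w) (S : Finset (Bool × Bool)) :
    (0 ≤ w (false, false) * memInd (false, false) S ∧
      w (false, false) * memInd (false, false) S < w (true, false)) ∧
    (0 ≤ w (true, false) * ↑(memInd (true, false) S + memInd (false, true) S) +
        w (false, false) * memInd (false, false) S ∧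
      w (true, false) * ↑(memInd (true, false) S + memInd (false, true) S) +
        w (false, false) * memInd (false, false) S < w (true, true)) := by
  have hc : (memInd (false, false) S : ℝ) ≤ 1 := by exact_mod_cast memInd_le_one _ _
  have hb : ((memInd (true, false) S + memInd (false, true) S : ℕ) : ℝ) ≤ 2 := by
    exact_mod_cast add_le_add (memInd_le_one _ _) (memInd_le_one _ _)
  have hγc_nonneg := mul_nonneg hw.pos.le (Nat.cast_nonneg (α := ℝ) (memInd (false, false) S))
  have hβb_nonneg := mul_nonneg hw.mixed_pos.le
    (Nat.cast_nonneg (α := ℝ) (memInd (true, false) S + memInd (false, true) S))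
  have hγc := mul_le_of_le_one_right hw.pos.le hc
  have hβb := mul_le_mul_of_nonneg_left hb hw.mixed_pos.le
  have := hw.lt_mixed
  have := hw.lt_top
  refine ⟨⟨hγc_nonneg, by linarith⟩, by linarith, by linarith⟩

theorem Pr_le_Pr_iff (hw : IsLexWeight w) (S T : Finset (Bool × Bool)) :
    Pr w T ≤ Pr w S ↔ lexKey T ≤ lexKey S := by
  obtain ⟨⟨hT₀, hT₁⟩, hT₂, hT₃⟩ := hw.remainder_bounds T
  obtain ⟨⟨hS₀, hS₁⟩, hS₂, hS₃⟩ := hw.remainder_bounds S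
  rw [Pr_eq_of_symm hw.symm, Pr_eq_of_symm hw.symm, mul_add_le_mul_add_iff hT₂ hT₃ hS₂ hS₃,
    mul_add_le_mul_add_iff hT₀ hT₁ hS₀ hS₁, mul_le_mul_iff_right₀ hw.pos, Nat.cast_le]
  simp only [lexKey, Prod.Lex.toLex_le_toLex]

end IsLexWeight

theorem isLexWeight_w₁ : IsLexWeight w₁ := by constructor <;> norm_num [w₁]

theorem isLexWeight_w₂ : IsLexWeight w₂ := by constructor <;> norm_num [w₂]

section
variable (w : Bool × Bool → ℝ)

theorem Pr_Aev : Pr w Aev = w (true, true) + w (true, false) := by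
  simp [Pr, show Aev = {(true, true), (true, false)} by decide]

theorem Pr_Bev : Pr w Bev = w (true, true) + w (false, true) := by
  simp [Pr, show Bev = {(true, true), (false, true)} by decide]

theorem Pr_Aev_inter_Bev : Pr w (Aev ∩ Bev) = w (true, true) := by
  simp [Pr, show Aev ∩ Bev = {(true, true)} by decide]

end

theorem stmt_2 :
    Pr w₁ (Aev ∩ Bev) = Pr w₁ Aev * Pr w₁ Bev ∧
    Pr w₂ (Aev ∩ Bev) ≠ Pr w₂ Aev * Pr w₂ Bev ∧
    ∀ S T : Finset (Bool × Bool), (Pr w₁ T ≤ Pr w₁ S ↔ Pr w₂ T ≤ Pr w₂ S) := by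
  refine ⟨?_, ?_, fun S T => ?_⟩
  · rw [Pr_Aev, Pr_Bev, Pr_Aev_inter_Bev]
    norm_num [w₁]
  · rw [Pr_Aev, Pr_Bev, Pr_Aev_inter_Bev]
    norm_num [w₂]
  · rw [isLexWeight_w₁.Pr_le_Pr_iff, isLexWeight_w₂.Pr_le_Pr_iff]
end

section
/- In a Boolean algebra with a total preorder ≿ satisfying monotonicity (β → α implies α ≿ β) and quasi-additivity (α ≿ β iff (α ∧ ¬β) ≿ (β ∧ ¬α)), the following cancellation rule holds: for pairwise incompatible α, β, γ, δ, ε, ζ, if (α ∨ ε) ≿ (γ ∨ ζ) and (β ∨ ζ) ≿ (δ ∨ ε), then (α ∨ β) ≿ (γ ∨ δ). -/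
/-! Add `b` to both sides of `h1` and `c` to both sides of `h2`; the two results chain by
transitivity to `a ⊔ b ⊔ e ≿ c ⊔ d ⊔ e`, and cancelling `e` gives the claim. Adding and
cancelling a common incompatible summand is exactly quasi-additivity. -/

section QuasiAdditive

variable {B : Type*} [BooleanAlgebra B]

lemma sup_sdiff_sup_right_of_disjoint {g d : B} (t : B) (hg : Disjoint g d) :
    (g ⊔ d) \ (t ⊔ d) = g \ t := by
  rw [sup_comm t, ← sdiff_sdiff_left, sup_sdiff_right_self, hg.sdiff_eq_left]

lemma rel_sup_sup_iff_of_quasi {r : B → B → Prop}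
    (hquasi : ∀ x y, r x y ↔ r (x ⊓ yᶜ) (y ⊓ xᶜ)) {g t d : B}
    (hg : Disjoint g d) (ht : Disjoint t d) :
    r (g ⊔ d) (t ⊔ d) ↔ r g t := by
  rw [hquasi (g ⊔ d), hquasi g, ← sdiff_eq, ← sdiff_eq, ← sdiff_eq, ← sdiff_eq,
    sup_sdiff_sup_right_of_disjoint t hg, sup_sdiff_sup_right_of_disjoint g ht]

end QuasiAdditive

theorem stmt_5_general {B : Type*} [BooleanAlgebra B] (r : B → B → Prop)
    (htrans : ∀ x y z, r x y → r y z → r x z)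
    (hquasi : ∀ x y, r x y ↔ r (x ⊓ yᶜ) (y ⊓ xᶜ))
    (a b c d e f : B)
    (hpair : ([a, b, c, d, e, f] : List B).Pairwise fun x y => x ⊓ y = ⊥)
    (h1 : r (a ⊔ e) (c ⊔ f)) (h2 : r (b ⊔ f) (d ⊔ e)) :
    r (a ⊔ b) (c ⊔ d) := by
  simp only [List.pairwise_cons, List.mem_cons, List.not_mem_nil, forall_eq_or_imp,
    ← disjoint_iff] at hpair
  obtain ⟨⟨hab, -, -, hae, -⟩, ⟨hbc, -, hbe, hbf, -⟩, ⟨hcd, hce, hcf, -⟩,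
    ⟨hde, -⟩, -⟩ := hpair
  have h1b : r (a ⊔ e ⊔ b) (b ⊔ f ⊔ c) := by
    rw [show b ⊔ f ⊔ c = c ⊔ f ⊔ b by ac_rfl]
    exact (rel_sup_sup_iff_of_quasi hquasi (hab.sup_left hbe.symm)
      (hbc.symm.sup_left hbf.symm)).2 h1
  have h2c : r (b ⊔ f ⊔ c) (d ⊔ e ⊔ c) :=
    (rel_sup_sup_iff_of_quasi hquasi (hbc.sup_left hcf.symm) (hcd.symm.sup_left hce.symm)).2 h2
  have hsum : r (a ⊔ b ⊔ e) (c ⊔ d ⊔ e) := by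
    rw [show a ⊔ b ⊔ e = a ⊔ e ⊔ b by ac_rfl, show c ⊔ d ⊔ e = d ⊔ e ⊔ c by ac_rfl]
    exact htrans _ _ _ h1b h2c
  exact (rel_sup_sup_iff_of_quasi hquasi (hae.sup_left hbe) (hce.sup_left hde)).1 hsum

theorem stmt_5 {B : Type*} [BooleanAlgebra B] (r : B → B → Prop)
    (htrans : ∀ x y z, r x y → r y z → r x z)
    (htot : ∀ x y, r x y ∨ r y x)
    (hdist : ∀ x y, y ≤ x → r x y)
    (hquasi : ∀ x y, r x y ↔ r (x ⊓ yᶜ) (y ⊓ xᶜ))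
    (a b c d e f : B)
    (hpair : ([a, b, c, d, e, f] : List B).Pairwise fun x y => x ⊓ y = ⊥)
    (h1 : r (a ⊔ e) (c ⊔ f)) (h2 : r (b ⊔ f) (d ⊔ e)) :
    r (a ⊔ b) (c ⊔ d) :=
  stmt_5_general r htrans hquasi a b c d e f hpair h1 h2
end

section
/- In a Boolean algebra with a total transitive relation ≿ satisfying monotonicity and quasi-additivity, for pairwise incompatible α, β, γ, δ: if (α ∨ β) ≿ (γ ∨ δ) and δ ≿ β, then α ≿ γ. -/
section QuasiAdditive

variable {B : Type*} [BooleanAlgebra B]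

lemma sup_inf_compl_sup_of_disjoint {x y w : B} (hx : Disjoint x w) :
    (x ⊔ w) ⊓ (y ⊔ w)ᶜ = x ⊓ yᶜ := by
  simp only [← sdiff_eq]
  rw [sup_comm y, ← sdiff_sdiff_left, sup_sdiff_right_self, hx.sdiff_eq_left]

/-- Adding a disjoint `w` changes neither `u \ v` nor `v \ u`, which is all `hquasi` lets `r` see. -/
lemma rel_sup_sup_right_iff {r : B → B → Prop} (hquasi : ∀ x y, r x y ↔ r (x ⊓ yᶜ) (y ⊓ xᶜ))
    {u v w : B} (hu : Disjoint u w) (hv : Disjoint v w) :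
    r (u ⊔ w) (v ⊔ w) ↔ r u v := by
  rw [hquasi, sup_inf_compl_sup_of_disjoint hu, sup_inf_compl_sup_of_disjoint hv, ← hquasi]

end QuasiAdditive

theorem stmt_6_general {B : Type*} [BooleanAlgebra B] (r : B → B → Prop)
    (htrans : ∀ x y z, r x y → r y z → r x z)
    (hquasi : ∀ x y, r x y ↔ r (x ⊓ yᶜ) (y ⊓ xᶜ))
    (a b c d : B)
    (hpair : ([a, b, c, d] : List B).Pairwise fun x y => x ⊓ y = ⊥)
    (h1 : r (a ⊔ b) (c ⊔ d)) (h2 : r d b) :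
    r a c := by
  simp only [List.pairwise_cons, List.mem_cons, List.not_mem_nil, ← disjoint_iff] at hpair
  have hab : Disjoint a b := hpair.1 b (by simp)
  have had : Disjoint a d := hpair.1 d (by simp)
  have hcd : Disjoint c d := hpair.2.2.1 d (by simp)
  have had_ab : r (a ⊔ d) (a ⊔ b) := by
    rw [sup_comm a d, sup_comm a b]
    exact (rel_sup_sup_right_iff hquasi had.symm hab.symm).mpr h2
  exact (rel_sup_sup_right_iff hquasi had hcd).mp (htrans _ _ _ had_ab h1)

theorem stmt_6 {B : Type*} [BooleanAlgebra B] (r : B → B → Prop)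
    (htrans : ∀ x y z, r x y → r y z → r x z)
    (htot : ∀ x y, r x y ∨ r y x)
    (hdist : ∀ x y, y ≤ x → r x y)
    (hquasi : ∀ x y, r x y ↔ r (x ⊓ yᶜ) (y ⊓ xᶜ))
    (a b c d : B)
    (hpair : ([a, b, c, d] : List B).Pairwise fun x y => x ⊓ y = ⊥)
    (h1 : r (a ⊔ b) (c ⊔ d)) (h2 : r d b) :
    r a c :=
  stmt_6_general r htrans hquasi a b c d hpair h1 h2
end

section
/- In a Boolean algebra with a total transitive relation ≿ satisfying monotonicity and quasi-additivity, for pairwise incompatible α, β, γ, δ: if α ≈ β and γ ≈ δ (where x ≈ y means x ≿ y and y ≿ x), then (α ∨ β) ≿ (γ ∨ δ) if and only if α ≿ γ. -/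
/-!
Both directions reduce to cancelling a common disjoint summand, which is quasi-additivity read
through `(x ⊔ z) \ (y ⊔ z) = x \ y` for `z` disjoint from `x`. If `α ≿ γ` then `β ≿ δ`, so
`α ∨ β ≿ α ∨ δ ≿ γ ∨ δ`. Conversely, if `α ∨ β ≿ γ ∨ δ` but not `α ≿ γ`, totality gives `γ ≿ α`,
hence `δ ≿ β` and `α ∨ β ≿ γ ∨ δ ≿ γ ∨ β`; cancelling `β` yields `α ≿ γ` after all.
-/

theorem sup_sdiff_sup_right_of_disjoint_s7 {B : Type*} [GeneralizedBooleanAlgebra B] {x z : B}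
    (y : B) (hxz : Disjoint x z) : (x ⊔ z) \ (y ⊔ z) = x \ y := by
  rw [sup_comm y z, ← sdiff_sdiff_left, sup_sdiff_right_self, hxz.sdiff_eq_left]

section QuasiAdditive

variable {B : Type*} [BooleanAlgebra B] {r : B → B → Prop}

theorem rel_sup_right_iff (hquasi : ∀ x y, r x y ↔ r (x ⊓ yᶜ) (y ⊓ xᶜ)) {x y z : B}
    (hxz : Disjoint x z) (hyz : Disjoint y z) : r (x ⊔ z) (y ⊔ z) ↔ r x y := by
  rw [hquasi (x ⊔ z), hquasi x y]
  simp only [← sdiff_eq, sup_sdiff_sup_right_of_disjoint_s7 _ hxz,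
    sup_sdiff_sup_right_of_disjoint_s7 _ hyz]

theorem rel_sup_left_iff (hquasi : ∀ x y, r x y ↔ r (x ⊓ yᶜ) (y ⊓ xᶜ)) {x y z : B}
    (hxz : Disjoint z x) (hyz : Disjoint z y) : r (z ⊔ x) (z ⊔ y) ↔ r x y := by
  rw [sup_comm z x, sup_comm z y]
  exact rel_sup_right_iff hquasi hxz.symm hyz.symm

variable (htrans : ∀ x y z, r x y → r y z → r x z)
  (hquasi : ∀ x y, r x y ↔ r (x ⊓ yᶜ) (y ⊓ xᶜ))
include htrans hquasi

theorem rel_sup_sup {a b c d : B} (hab : Disjoint a b) (had : Disjoint a d) (hcd : Disjoint c d)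
    (hac : r a c) (hbd : r b d) : r (a ⊔ b) (c ⊔ d) :=
  htrans _ _ _ ((rel_sup_left_iff hquasi hab had).mpr hbd)
    ((rel_sup_right_iff hquasi had hcd).mpr hac)

theorem rel_of_rel_sup_sup {a b c d : B} (hab : Disjoint a b) (hcb : Disjoint c b)
    (hcd : Disjoint c d) (h : r (a ⊔ b) (c ⊔ d)) (hdb : r d b) : r a c :=
  (rel_sup_right_iff hquasi hab hcb).mp
    (htrans _ _ _ h ((rel_sup_left_iff hquasi hcd hcb).mpr hdb))

end QuasiAdditive

theorem stmt_7_general {B : Type*} [BooleanAlgebra B] (r : B → B → Prop)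
    (htrans : ∀ x y z, r x y → r y z → r x z)
    (htot : ∀ x y, r x y ∨ r y x)
    (hquasi : ∀ x y, r x y ↔ r (x ⊓ yᶜ) (y ⊓ xᶜ))
    (a b c d : B)
    (hpair : ([a, b, c, d] : List B).Pairwise fun x y => x ⊓ y = ⊥)
    (hab : r a b ∧ r b a) (hcd : r c d ∧ r d c) :
    (r (a ⊔ b) (c ⊔ d) ↔ r a c) := by
  simp only [List.pairwise_cons, List.mem_cons, List.not_mem_nil, List.Pairwise.nil,
    forall_eq_or_imp, forall_eq, or_false, false_implies, implies_true, and_true,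
    ← disjoint_iff] at hpair
  obtain ⟨⟨hab', -, had'⟩, ⟨hbc', -⟩, hcd'⟩ := hpair
  constructor
  · intro h
    refine (htot a c).elim id fun hca => ?_
    have hdb : r d b := htrans _ _ _ hcd.2 (htrans _ _ _ hca hab.1)
    exact rel_of_rel_sup_sup htrans hquasi hab' hbc'.symm hcd' h hdb
  · intro hac
    have hbd : r b d := htrans _ _ _ hab.2 (htrans _ _ _ hac hcd.1)
    exact rel_sup_sup htrans hquasi hab' had' hcd' hac hbd

theorem stmt_7 {B : Type*} [BooleanAlgebra B] (r : B → B → Prop)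
    (htrans : ∀ x y z, r x y → r y z → r x z)
    (htot : ∀ x y, r x y ∨ r y x)
    (hdist : ∀ x y, y ≤ x → r x y)
    (hquasi : ∀ x y, r x y ↔ r (x ⊓ yᶜ) (y ⊓ xᶜ))
    (a b c d : B)
    (hpair : ([a, b, c, d] : List B).Pairwise fun x y => x ⊓ y = ⊥)
    (hab : r a b ∧ r b a) (hcd : r c d ∧ r d c) :
    (r (a ⊔ b) (c ⊔ d) ↔ r a c) :=
  stmt_7_general r htrans htot hquasi a b c d hpair hab hcd
end

section
/- Quasi-additivity is equivalent to its primed form: given monotonicity and Boolean reasoning, the axiom 'α ≿ β iff (α ∧ ¬β) ≿ (β ∧ ¬α)' holds for all α, β if and only if 'for all γ, θ, δ with δ incompatible with γ and with θ, (γ ∨ δ) ≿ (θ ∨ δ) iff γ ≿ θ' holds. -/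
/-! Both axioms are purely Boolean reformulations of each other. Adding a `d` disjoint from `c`
and `t` does not change the differences `c \ t` and `t \ c`, so quasi-additivity gives the primed
form. Conversely, `x` and `y` are obtained from `x \ y` and `y \ x` by adding the common part
`x ⊓ y`, which is disjoint from both. -/

theorem Disjoint.sup_sdiff_sup_right {B : Type*} [GeneralizedBooleanAlgebra B] {c d : B} (t : B)
    (h : Disjoint c d) : (c ⊔ d) \ (t ⊔ d) = c \ t := by
  rw [sup_sdiff, sdiff_eq_bot_iff.mpr le_sup_right, sup_bot_eq, sup_comm, ← sdiff_sdiff_left,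
    h.sdiff_eq_left]

theorem stmt_8_general {B : Type*} [BooleanAlgebra B] (r : B → B → Prop) :
    (∀ x y, r x y ↔ r (x ⊓ yᶜ) (y ⊓ xᶜ)) ↔
      (∀ c t d, c ⊓ d = ⊥ → t ⊓ d = ⊥ → (r (c ⊔ d) (t ⊔ d) ↔ r c t)) := by
  simp only [← sdiff_eq, ← disjoint_iff]
  constructor
  · intro hquasi c t d hc ht
    rw [hquasi, hc.sup_sdiff_sup_right, ht.sup_sdiff_sup_right, ← hquasi]
  · intro hquasi' x y
    have hx : Disjoint (x \ y) (x ⊓ y) := disjoint_sdiff_self_left.mono_right inf_le_right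
    have hy : Disjoint (y \ x) (x ⊓ y) := disjoint_sdiff_self_left.mono_right inf_le_left
    rw [← hquasi' _ _ _ hx hy, sup_sdiff_inf, inf_comm, sup_sdiff_inf]

theorem stmt_8 {B : Type*} [BooleanAlgebra B] (r : B → B → Prop)
    (htrans : ∀ x y z, r x y → r y z → r x z)
    (htot : ∀ x y, r x y ∨ r y x)
    (hdist : ∀ x y, y ≤ x → r x y) :
    (∀ x y, r x y ↔ r (x ⊓ yᶜ) (y ⊓ xᶜ)) ↔
      (∀ c t d, c ⊓ d = ⊥ → t ⊓ d = ⊥ → (r (c ⊔ d) (t ⊔ d) ↔ r c t)) :=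
  stmt_8_general r
end

section
/- Let Ω be finite, F a field of sets over Ω, and ≿ a reflexive total order on F satisfying: ∅ ⋡ Ω; A ≿ ∅ for all A; and all finite cancellation axioms (if (Aᵢ) and (Bᵢ) are balanced sequences with Aᵢ ≿ Bᵢ for all i < n, then Bₙ ≿ Aₙ). Then there exists a probability measure ℙ on (Ω, F) such that A ≿ B iff ℙ(A) ≥ ℙ(B). -/
lemma farkas_fin {ι : Type*} [Fintype ι] :
    ∀ (m : ℕ) (a : Fin m → (ι → ℚ)) (b : ι → ℚ),
      (¬ ∃ c : Fin m → ℚ, (∀ i, 0 ≤ c i) ∧ ∑ i, c i • a i = b) →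
      ∃ φ : (ι → ℚ) →ₗ[ℚ] ℚ, (∀ i, 0 ≤ φ (a i)) ∧ φ b < 0 := by
  intro m
  induction m with
  | zero =>
    intro a b h
    have hb : b ≠ 0 := by
      intro hb0
      exact h ⟨0, fun i => le_refl 0, by simp [hb0]⟩
    obtain ⟨ω, hω⟩ : ∃ ω, b ω ≠ 0 := by
      by_contra hc; push_neg at hc; exact hb (funext hc)
    rcases lt_or_gt_of_ne hω with hlt | hgt
    · exact ⟨LinearMap.proj ω, fun i => i.elim0, hlt⟩
    · exact ⟨-LinearMap.proj ω, fun i => i.elim0, by simpa using hgt⟩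
  | succ m ih =>
    intro a b h
    set a' : Fin m → (ι → ℚ) := fun i => a i.castSucc with ha'
    set aL : ι → ℚ := a (Fin.last m) with haL
    have h' : ¬ ∃ c : Fin m → ℚ, (∀ i, 0 ≤ c i) ∧ ∑ i, c i • a' i = b := by
      rintro ⟨c, hc, hsum⟩
      refine h ⟨Fin.snoc c 0, ?_, ?_⟩
      · intro i
        refine Fin.lastCases ?_ ?_ i
        · simp
        · intro j; simpa using hc j
      · rw [Fin.sum_univ_castSucc]
        simpa using hsum
    obtain ⟨φ, hφ, hφb⟩ := ih a' b h'
    by_cases hL : 0 ≤ φ aL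
    · refine ⟨φ, ?_, hφb⟩
      intro i
      refine Fin.lastCases ?_ ?_ i
      · exact hL
      · intro j; exact hφ j
    · push_neg at hL
      have hs : φ aL ≠ 0 := ne_of_lt hL
      set a'' : Fin m → (ι → ℚ) := fun i => a' i - (φ (a' i) / φ aL) • aL with ha''
      set b'' : ι → ℚ := b - (φ b / φ aL) • aL with hb''
      have h'' : ¬ ∃ c : Fin m → ℚ, (∀ i, 0 ≤ c i) ∧ ∑ i, c i • a'' i = b'' := by
        rintro ⟨c, hc, hsum⟩
        set μ : ℚ := (φ b - ∑ i, c i * φ (a' i)) / φ aL with hμ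
        have hμpos : 0 < μ := by
          apply div_pos_of_neg_of_neg _ hL
          have h1 : 0 ≤ ∑ i, c i * φ (a' i) :=
            Finset.sum_nonneg fun i _ => mul_nonneg (hc i) (hφ i)
          linarith
        refine h ⟨Fin.snoc c μ, ?_, ?_⟩
        · intro i
          refine Fin.lastCases ?_ ?_ i
          · simpa using hμpos.le
          · intro j; simpa using hc j
        · rw [Fin.sum_univ_castSucc]
          simp only [Fin.snoc_castSucc, Fin.snoc_last]
          have expand : ∑ i, c i • a'' i
              = ∑ i, c i • a' i - ∑ i, (c i * φ (a' i) / φ aL) • aL := by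
            rw [← Finset.sum_sub_distrib]
            refine Finset.sum_congr rfl fun i _ => ?_
            rw [ha'', smul_sub, smul_smul, mul_div_assoc]
          rw [hsum] at expand
          rw [hb''] at expand
          have hsc : μ = φ b / φ aL - ∑ i, (c i * φ (a' i) / φ aL) := by
            rw [hμ, sub_div, Finset.sum_div]
          rw [hsc, sub_smul, Finset.sum_smul]
          linear_combination (norm := module) -expand
      obtain ⟨ψ, hψ, hψb⟩ := ih a'' b'' h''
      refine ⟨ψ - (ψ aL / φ aL) • φ, ?_, ?_⟩
      · intro i
        refine Fin.lastCases ?_ ?_ i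
        · simp only [LinearMap.sub_apply, LinearMap.smul_apply, smul_eq_mul]
          rw [div_mul_cancel₀ _ hs]
          simp
          exact le_rfl
        · intro j
          have h1 : ψ (a' j) = ψ (a'' j) + (φ (a' j) / φ aL) * ψ aL := by
            rw [ha'']; simp [map_sub, map_smul, smul_eq_mul]
          simp only [LinearMap.sub_apply, LinearMap.smul_apply, smul_eq_mul, h1]
          have h2 : (φ (a' j) / φ aL) * ψ aL - ψ aL / φ aL * φ (a' j) = 0 := by ring
          have h3 := hψ j
          linarith
      · have h1 : ψ b = ψ b'' + (φ b / φ aL) * ψ aL := by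
          rw [hb'']; simp [map_sub, map_smul, smul_eq_mul]
        simp only [LinearMap.sub_apply, LinearMap.smul_apply, smul_eq_mul, h1]
        have h2 : (φ b / φ aL) * ψ aL - ψ aL / φ aL * φ b = 0 := by ring
        linarith

lemma farkas {ι κ : Type*} [Fintype ι] [Fintype κ] (a : κ → (ι → ℚ)) (b : ι → ℚ)
    (h : ¬ ∃ c : κ → ℚ, (∀ p, 0 ≤ c p) ∧ ∑ p, c p • a p = b) :
    ∃ φ : (ι → ℚ) →ₗ[ℚ] ℚ, (∀ p, 0 ≤ φ (a p)) ∧ φ b < 0 := by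
  obtain ⟨e⟩ : Nonempty (κ ≃ Fin (Fintype.card κ)) := ⟨Fintype.equivFin κ⟩
  obtain ⟨φ, hφ, hφb⟩ := farkas_fin (Fintype.card κ) (a ∘ e.symm) b (by
    rintro ⟨c, hc, hsum⟩
    refine h ⟨c ∘ e, fun p => hc _, ?_⟩
    rw [← hsum, ← Equiv.sum_comp e]
    simp)
  refine ⟨φ, fun p => ?_, hφb⟩
  simpa using hφ (e p)

lemma nat_coeffs {κ : Type*} [Fintype κ] (c : κ → ℚ) (hc : ∀ p, 0 ≤ c p) :
    ∃ (N : ℕ) (k : κ → ℕ), 0 < N ∧ ∀ p, c p * N = k p := by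
  classical
  refine ⟨∏ q, (c q).den, fun p => (c p).num.toNat * ((∏ q, (c q).den) / (c p).den), ?_, ?_⟩
  · exact Finset.prod_pos fun p _ => (c p).pos
  · intro p
    simp only
    obtain ⟨d, hd⟩ : (c p).den ∣ ∏ q, (c q).den :=
      Finset.dvd_prod_of_mem _ (Finset.mem_univ p)
    have hnum : ((c p).num.toNat : ℚ) = ((c p).num : ℚ) := by
      exact_mod_cast Int.toNat_of_nonneg (Rat.num_nonneg.mpr (hc p))
    rw [hd, Nat.mul_div_cancel_left _ (c p).pos]
    push_cast [hnum]
    rw [← mul_assoc, Rat.mul_den_eq_num]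

lemma sum_flatMap_replicate {α β : Type*} (l : List α) (k : α → ℕ) (g : α → β) (f : β → ℕ) :
    (((l.flatMap fun p => List.replicate (k p) (g p))).map f).sum
      = (l.map (fun p => k p * f (g p))).sum := by
  induction l with
  | nil => simp
  | cons a l ih => simp [ih, List.sum_replicate, mul_comm]

/-- ℕ-valued indicator. -/
noncomputable def ind {Ω : Type*} (X : Set Ω) (ω : Ω) : ℕ := X.indicator (fun _ => 1) ω

/-- ℚ-valued indicator. -/
noncomputable def indQ {Ω : Type*} (X : Set Ω) : Ω → ℚ := X.indicator (fun _ => 1)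

lemma cast_ind {Ω : Type*} (X : Set Ω) (ω : Ω) : ((ind X ω : ℕ) : ℚ) = indQ X ω := by
  classical
  by_cases h : ω ∈ X <;> simp [ind, indQ, h]

lemma indQ_empty {Ω : Type*} : indQ (∅ : Set Ω) = 0 := by funext ω; simp [indQ]

lemma indQ_union {Ω : Type*} (A B : Set Ω) (h : A ∩ B = ∅) :
    indQ (A ∪ B) = indQ A + indQ B := by
  classical
  funext ω
  have hω : ω ∉ A ∨ ω ∉ B := by
    by_contra hc
    push_neg at hc
    have : ω ∈ A ∩ B := ⟨hc.1, hc.2⟩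
    rw [h] at this
    exact this
  by_cases hA : ω ∈ A <;> by_cases hB : ω ∈ B <;>
    simp [indQ, Set.indicator, hA, hB] <;> tauto

section Key

variable {Ω : Type*} [Fintype Ω] (F : Set (Set Ω)) (R : Set Ω → Set Ω → Prop)

/-- the type of "weak pairs" -/
def WP : Type _ := {p : Set Ω × Set Ω // p.1 ∈ F ∧ p.2 ∈ F ∧ R p.1 p.2}

instance : Finite (WP F R) := by
  unfold WP
  infer_instance

/-- difference vector of a weak pair -/
noncomputable def vec (p : WP F R) : Ω → ℚ := indQ p.val.1 - indQ p.val.2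

lemma key [Fintype (WP F R)]
    (hcan : ∀ (n : ℕ) (A B : Fin (n + 1) → Set Ω),
      (∀ i, A i ∈ F) → (∀ i, B i ∈ F) →
      (∀ ω : Ω, (∑ i, (A i).indicator (fun _ => (1 : ℕ)) ω) =
        ∑ i, (B i).indicator (fun _ => (1 : ℕ)) ω) →
      (∀ i : Fin (n + 1), (i : ℕ) < n → R (A i) (B i)) →
      R (B (Fin.last n)) (A (Fin.last n)))
    (A B : Set Ω) (hA : A ∈ F) (hB : B ∈ F) (hAB : R A B) (hBA : ¬ R B A) :
    ¬ ∃ c : WP F R → ℚ, (∀ p, 0 ≤ c p) ∧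
      ∑ p, c p • vec F R p = -(indQ A - indQ B) := by
  classical
  rintro ⟨c, hc, hsum⟩
  obtain ⟨N, k, hN, hk⟩ := nat_coeffs c hc
  -- the list of weak pairs with multiplicities, followed by N - 1 copies of (A, B)
  set t : Set Ω × Set Ω := (A, B) with ht
  set l0 : List (Set Ω × Set Ω) :=
    ((Finset.univ : Finset (WP F R)).toList.flatMap
      fun p => List.replicate (k p) p.val) ++ List.replicate (N - 1) t with hl0
  set n : ℕ := l0.length with hn
  set A' : Fin (n + 1) → Set Ω := Fin.snoc (fun i => (l0.get i).1) A with hA'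
  set B' : Fin (n + 1) → Set Ω := Fin.snoc (fun i => (l0.get i).2) B with hB'
  -- all elements of l0 are good pairs
  have hmem : ∀ q ∈ l0, q.1 ∈ F ∧ q.2 ∈ F ∧ R q.1 q.2 := by
    intro q hq
    rw [hl0, List.mem_append] at hq
    rcases hq with hq | hq
    · rw [List.mem_flatMap] at hq
      obtain ⟨p, _, hq⟩ := hq
      rw [List.eq_of_mem_replicate hq]
      exact p.property
    · rw [List.eq_of_mem_replicate hq]
      exact ⟨hA, hB, hAB⟩
  -- the sum over l0 of any ℕ-valued function
  have hsum0 : ∀ f : Set Ω × Set Ω → ℕ,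
      (l0.map f).sum = ∑ p, k p * f p.val + (N - 1) * f t := by
    intro f
    rw [hl0, List.map_append, List.sum_append, List.map_replicate, List.sum_replicate,
      smul_eq_mul, sum_flatMap_replicate, Finset.sum_map_toList]
  -- the scalar equation at each point ω, in ℕ
  have hnat : ∀ ω : Ω,
      (∑ p, k p * ind p.val.1 ω) + N * ind A ω
        = (∑ p, k p * ind p.val.2 ω) + N * ind B ω := by
    intro ω
    have hω := congrFun hsum ω
    simp only [Finset.sum_apply, Pi.smul_apply, Pi.neg_apply, Pi.sub_apply,
      smul_eq_mul, vec] at hω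
    -- hω : ∑ p, c p * (indQ p.val.1 ω - indQ p.val.2 ω) = -(indQ A ω - indQ B ω)
    have key1 : ∑ p, (k p : ℚ) * indQ p.val.1 ω - ∑ p, (k p : ℚ) * indQ p.val.2 ω
        = N * ∑ p, c p * (indQ p.val.1 ω - indQ p.val.2 ω) := by
      rw [Finset.mul_sum, ← Finset.sum_sub_distrib]
      refine Finset.sum_congr rfl fun p _ => ?_
      rw [← hk p]
      ring
    apply Nat.cast_inj (R := ℚ) |>.mp
    push_cast [cast_ind]
    rw [hω] at key1
    linarith [key1]
  -- apply the cancellation axiom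
  have hres := hcan n A' B' ?_ ?_ ?_ ?_
  · rw [hA', hB'] at hres
    simp only [Fin.snoc_last] at hres
    exact hBA hres
  · intro i
    refine Fin.lastCases ?_ ?_ i
    · simp only [hA', Fin.snoc_last]; exact hA
    · intro j
      simp only [hA', Fin.snoc_castSucc]
      exact (hmem _ (l0.get_mem j)).1
  · intro i
    refine Fin.lastCases ?_ ?_ i
    · simp only [hB', Fin.snoc_last]; exact hB
    · intro j
      simp only [hB', Fin.snoc_castSucc]
      exact (hmem _ (l0.get_mem j)).2.1
  · intro ω
    rw [Fin.sum_univ_castSucc, Fin.sum_univ_castSucc]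
    simp only [hA', hB', Fin.snoc_castSucc, Fin.snoc_last]
    have e1 : ∑ i : Fin n, (((l0.get i).1).indicator (fun _ => (1:ℕ)) ω)
        = (l0.map fun q => ind q.1 ω).sum := by
      rw [← Fin.sum_univ_fun_getElem l0 (fun q => ind q.1 ω)]
      rfl
    have e2 : ∑ i : Fin n, (((l0.get i).2).indicator (fun _ => (1:ℕ)) ω)
        = (l0.map fun q => ind q.2 ω).sum := by
      rw [← Fin.sum_univ_fun_getElem l0 (fun q => ind q.2 ω)]
      rfl
    rw [e1, e2, hsum0, hsum0]
    have hnω := hnat ω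
    have hN1 : N - 1 + 1 = N := Nat.succ_pred_eq_of_pos hN
    have hindAB : ∀ X : Set Ω, X.indicator (fun _ => (1:ℕ)) ω = ind X ω := fun X => rfl
    rw [hindAB A, hindAB B]
    simp only [ht]
    have hrep : ∀ x : ℕ, (N - 1) * x + x = N * x := by
      intro x
      cases N with
      | zero => omega
      | succ M => simp [Nat.succ_sub_one, Nat.succ_mul]
    rw [add_assoc, add_assoc, hrep, hrep]
    linarith [hnω]
  · intro i _
    refine Fin.lastCases ?_ ?_ i
    · simp only [hA', hB', Fin.snoc_last]; exact hAB
    · intro j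
      simp only [hA', hB', Fin.snoc_castSucc]
      exact (hmem _ (l0.get_mem j)).2.2
end Key

theorem stmt_11 {Ω : Type*} [Fintype Ω]
    (F : Set (Set Ω)) (hempty : ∅ ∈ F) (huniv : Set.univ ∈ F)
    (hcompl : ∀ A ∈ F, Aᶜ ∈ F) (hunion : ∀ A ∈ F, ∀ B ∈ F, A ∪ B ∈ F)
    (R : Set Ω → Set Ω → Prop)
    (hrefl : ∀ A ∈ F, R A A)
    (htot : ∀ A ∈ F, ∀ B ∈ F, R A B ∨ R B A)
    (htrans : ∀ A ∈ F, ∀ B ∈ F, ∀ C ∈ F, R A B → R B C → R A C)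
    (hnondeg : ¬ R ∅ Set.univ)
    (hnontriv : ∀ A ∈ F, R A ∅)
    (hcan : ∀ (n : ℕ) (A B : Fin (n + 1) → Set Ω),
      (∀ i, A i ∈ F) → (∀ i, B i ∈ F) →
      (∀ ω : Ω, (∑ i, (A i).indicator (fun _ => (1 : ℕ)) ω) =
        ∑ i, (B i).indicator (fun _ => (1 : ℕ)) ω) →
      (∀ i : Fin (n + 1), (i : ℕ) < n → R (A i) (B i)) →
      R (B (Fin.last n)) (A (Fin.last n))) :
    ∃ P : Set Ω → ℝ,
      (∀ A ∈ F, 0 ≤ P A) ∧ P Set.univ = 1 ∧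
      (∀ A ∈ F, ∀ B ∈ F, A ∩ B = ∅ → P (A ∪ B) = P A + P B) ∧
      (∀ A ∈ F, ∀ B ∈ F, (R A B ↔ P B ≤ P A)) := by
  classical
  letI : Fintype (WP F R) := Fintype.ofFinite _
  set SP := {p : Set Ω × Set Ω // p.1 ∈ F ∧ p.2 ∈ F ∧ R p.1 p.2 ∧ ¬ R p.2 p.1} with hSP
  letI : Finite SP := by rw [hSP]; infer_instance
  letI : Fintype SP := Fintype.ofFinite _
  have hfun : ∀ p : SP, ∃ φ : (Ω → ℚ) →ₗ[ℚ] ℚ,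
      (∀ q : WP F R, 0 ≤ φ (vec F R q)) ∧ 0 < φ (indQ p.val.1 - indQ p.val.2) := by
    rintro ⟨⟨A, B⟩, hA, hB, hAB, hBA⟩
    obtain ⟨φ, hφ, hφb⟩ :=
      farkas (vec F R) (-(indQ A - indQ B)) (key F R hcan A B hA hB hAB hBA)
    refine ⟨φ, hφ, ?_⟩
    rw [map_neg] at hφb
    simpa using hφb
  choose Φ hΦw hΦs using hfun
  set φ : (Ω → ℚ) →ₗ[ℚ] ℚ := ∑ p : SP, Φ p with hφdef
  have happ : ∀ v, φ v = ∑ p : SP, Φ p v := by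
    intro v; rw [hφdef]; simp
  have hw : ∀ A B : Set Ω, A ∈ F → B ∈ F → R A B → 0 ≤ φ (indQ A - indQ B) := by
    intro A B hA hB hAB
    rw [happ]
    exact Finset.sum_nonneg fun p _ => hΦw p ⟨(A, B), hA, hB, hAB⟩
  have hs : ∀ A B : Set Ω, A ∈ F → B ∈ F → R A B → ¬ R B A →
      0 < φ (indQ A - indQ B) := by
    intro A B hA hB hAB hBA
    rw [happ]
    refine Finset.sum_pos' (fun p _ => hΦw p ⟨(A, B), hA, hB, hAB⟩)
      ⟨⟨(A, B), hA, hB, hAB, hBA⟩, Finset.mem_univ _, hΦs _⟩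
  have hu : 0 < φ (indQ Set.univ) := by
    have := hs Set.univ ∅ huniv hempty (hnontriv _ huniv) hnondeg
    simpa [indQ_empty] using this
  set u := φ (indQ Set.univ) with hudef
  have hiff : ∀ A B : Set Ω, A ∈ F → B ∈ F →
      (R A B ↔ φ (indQ B) ≤ φ (indQ A)) := by
    intro A B hA hB
    constructor
    · intro hAB
      have h1 := hw A B hA hB hAB
      rw [map_sub] at h1
      linarith
    · intro hle
      by_contra hAB
      rcases htot A hA B hB with h | h
      · exact hAB h
      have hstrict := hs B A hB hA h hAB
      rw [map_sub] at hstrict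
      linarith
  refine ⟨fun X => ((φ (indQ X) / u : ℚ) : ℝ), ?_, ?_, ?_, ?_⟩
  · intro A hA
    show (0 : ℝ) ≤ ((φ (indQ A) / u : ℚ) : ℝ)
    have h0 : 0 ≤ φ (indQ A) := by
      have := hw A ∅ hA hempty (hnontriv A hA)
      simpa [indQ_empty] using this
    have : (0 : ℚ) ≤ φ (indQ A) / u := div_nonneg h0 hu.le
    exact_mod_cast this
  · show ((φ (indQ Set.univ) / u : ℚ) : ℝ) = 1
    rw [← hudef, div_self (ne_of_gt hu)]
    norm_num
  · intro A hA B hB hdisj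
    show ((φ (indQ (A ∪ B)) / u : ℚ) : ℝ) = _
    rw [indQ_union A B hdisj, map_add]
    push_cast
    ring
  · intro A hA B hB
    show R A B ↔ ((φ (indQ B) / u : ℚ) : ℝ) ≤ ((φ (indQ A) / u : ℚ) : ℝ)
    rw [hiff A B hA hB, ← Rat.cast_le (K := ℝ)]
    constructor
    · intro h
      have h0 : φ (indQ B) ≤ φ (indQ A) := by exact_mod_cast h
      have : φ (indQ B) / u ≤ φ (indQ A) / u := by gcongr
      exact_mod_cast this
    · intro h
      have h2 : φ (indQ B) / u ≤ φ (indQ A) / u := by exact_mod_cast h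
      have h3 := mul_le_mul_of_nonneg_right h2 hu.le
      rw [div_mul_cancel₀ _ (ne_of_gt hu), div_mul_cancel₀ _ (ne_of_gt hu)] at h3
      exact_mod_cast h3
end

section
/- Let R be a commutative ring and ≿ a total preorder on R compatible with the ring structure in the sense that t ≿ t', u ≿ u' implies t·u + t'·u' ≿ t·u' + t'·u (the Sub axiom), together with distributivity. Then for terms t₁ ≿ t'₁, …, tₙ ≿ t'ₙ, the sum of all products s₁⋯sₙ with sᵢ ∈ {tᵢ, t'ᵢ} having an even number of primed factors dominates (under ≿) the sum of those products with an odd number of primed factors. -/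
/-!
Expanding `∏ᵢ (tᵢ - t'ᵢ)` gives the even-minus-odd difference, but `≿` is only a preorder, so the
argument instead peels off the first factor: with `E`, `O` the even and odd sums of the remaining
factors, the even and odd sums of all factors are `t₀ E + t'₀ O` and `t₀ O + t'₀ E`, and the Sub
axiom applied to `t₀ ≿ t'₀` and `E ≿ O` (induction) compares them. The base case is `1 ≿ 0`; if
instead `0 ≿ 1`, the Sub axiom makes `≿` the full relation.
-/

open Finset

section ProdSum

variable {R : Type*} [CommRing R] {n : ℕ}

def filteredProdSum (P : ℕ → Prop) [DecidablePred P] (t t' : Fin n → R) : R :=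
  ∑ s ∈ univ.filter (fun s : Fin n → Bool => P (univ.filter (fun i => s i = true)).card),
    ∏ i, if s i then t' i else t i

abbrev evenProdSum (t t' : Fin n → R) : R := filteredProdSum (· % 2 = 0) t t'

abbrev oddProdSum (t t' : Fin n → R) : R := filteredProdSum (· % 2 = 1) t t'

lemma card_filter_cons_eq_true (b : Bool) (s : Fin n → Bool) :
    (univ.filter (fun i => (Fin.cons b s : Fin (n + 1) → Bool) i = true)).card
      = (univ.filter (fun i => s i = true)).card + if b then 1 else 0 := by
  rw [card_filter, Fin.sum_univ_succ, card_filter]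
  simp only [Fin.cons_zero, Fin.cons_succ, add_comm]

lemma filteredProdSum_succ (P : ℕ → Prop) [DecidablePred P] (t t' : Fin (n + 1) → R) :
    filteredProdSum P t t'
      = t 0 * filteredProdSum P (Fin.tail t) (Fin.tail t')
        + t' 0 * filteredProdSum (fun k => P (k + 1)) (Fin.tail t) (Fin.tail t') := by
  simp only [filteredProdSum, sum_filter, mul_sum]
  rw [← (Fin.consEquiv fun _ => Bool).sum_comp, Fintype.sum_prod_type, Fintype.sum_bool, add_comm]
  simp only [Fin.consEquiv_apply, card_filter_cons_eq_true, Fin.prod_univ_succ, Fin.cons_zero,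
    Fin.cons_succ, Fin.tail, if_true, Bool.false_eq_true, if_false, add_zero, mul_ite, mul_zero]

@[simp]
lemma filteredProdSum_zero (P : ℕ → Prop) [DecidablePred P] (t t' : Fin 0 → R) :
    filteredProdSum P t t' = if P 0 then 1 else 0 := by
  split_ifs <;> simp [filteredProdSum, *]

lemma evenProdSum_succ (t t' : Fin (n + 1) → R) :
    evenProdSum t t'
      = t 0 * evenProdSum (Fin.tail t) (Fin.tail t')
        + t' 0 * oddProdSum (Fin.tail t) (Fin.tail t') := by
  rw [evenProdSum, filteredProdSum_succ]
  congr 3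
  funext k
  simp only [Nat.succ_mod_two_eq_zero_iff]

lemma oddProdSum_succ (t t' : Fin (n + 1) → R) :
    oddProdSum t t'
      = t 0 * oddProdSum (Fin.tail t) (Fin.tail t')
        + t' 0 * evenProdSum (Fin.tail t) (Fin.tail t') := by
  rw [oddProdSum, filteredProdSum_succ]
  congr 3
  funext k
  simp only [Nat.succ_mod_two_eq_one_iff]

end ProdSum

section Sub

variable {R : Type*} [CommRing R] (r : R → R → Prop)
  (hsub : ∀ t t' u u', r t t' → r u u' → r (t * u + t' * u') (t * u' + t' * u))
include hsub

theorem rel_evenProdSum_oddProdSum (h10 : r 1 0) :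
    ∀ {n : ℕ} (t t' : Fin n → R), (∀ i, r (t i) (t' i)) → r (evenProdSum t t') (oddProdSum t t')
  | 0, _, _, _ => by simpa using h10
  | _ + 1, t, t', h => by
    rw [evenProdSum_succ, oddProdSum_succ]
    exact hsub _ _ _ _ (h 0) (rel_evenProdSum_oddProdSum h10 _ _ fun i => h i.succ)

theorem rel_of_rel_zero_one (htot : ∀ a b, r a b ∨ r b a) (h01 : r 0 1) (a b : R) : r a b := by
  rcases htot a b with hab | hba
  · exact hab
  · simpa using hsub b a 0 1 hba h01

end Sub

theorem stmt_16_general {R : Type*} [CommRing R] (r : R → R → Prop)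
    (htot : ∀ a b, r a b ∨ r b a)
    (hsub : ∀ t t' u u', r t t' → r u u' → r (t * u + t' * u') (t * u' + t' * u))
    (n : ℕ) (t t' : Fin n → R) (h : ∀ i, r (t i) (t' i)) :
    r (∑ s ∈ Finset.univ.filter (fun s : Fin n → Bool =>
          (Finset.univ.filter (fun i => s i = true)).card % 2 = 0),
        ∏ i, if s i then t' i else t i)
      (∑ s ∈ Finset.univ.filter (fun s : Fin n → Bool =>
          (Finset.univ.filter (fun i => s i = true)).card % 2 = 1),
        ∏ i, if s i then t' i else t i) := by
  rcases htot 1 0 with h10 | h01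
  · exact rel_evenProdSum_oddProdSum r hsub h10 t t' h
  · exact rel_of_rel_zero_one r hsub htot h01 _ _

theorem stmt_16 {R : Type*} [CommRing R] (r : R → R → Prop)
    (hrefl : ∀ a, r a a) (htrans : ∀ a b c, r a b → r b c → r a c)
    (htot : ∀ a b, r a b ∨ r b a)
    (hsub : ∀ t t' u u', r t t' → r u u' → r (t * u + t' * u') (t * u' + t' * u))
    (n : ℕ) (t t' : Fin n → R) (h : ∀ i, r (t i) (t' i)) :
    r (∑ s ∈ Finset.univ.filter (fun s : Fin n → Bool =>
          (Finset.univ.filter (fun i => s i = true)).card % 2 = 0),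
        ∏ i, if s i then t' i else t i)
      (∑ s ∈ Finset.univ.filter (fun s : Fin n → Bool =>
          (Finset.univ.filter (fun i => s i = true)).card % 2 = 1),
        ∏ i, if s i then t' i else t i) :=
  stmt_16_general r htot hsub n t t' h
end

section
/- The 2×2 symmetric positive matrix M with entries M₁₁=1/12, M₁₂=M₂₁=3/12, M₂₂=5/12 has rank 2, yet the bilinear form Φ(x,y)=xᵀMy induces the same order on pairs of indicator vectors of subsets of {1,2} as the rank-1 form Ψ(x,y)=xᵀNy with N₁₁=1/16, N₁₂=N₂₁=3/16, N₂₂=9/16: for all A,B,C,D ⊆ {1,2}, Φ(1_A,1_B) ≥ Φ(1_C,1_D) iff Ψ(1_A,1_B) ≥ Ψ(1_C,1_D). -/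
/-- The bilinear form `xᵀ M y` evaluated at indicator vectors of the sets `A`, `B`. -/
noncomputable def bq (M : Matrix (Fin 2) (Fin 2) ℝ) (A B : Finset (Fin 2)) : ℝ :=
  ∑ i ∈ A, ∑ j ∈ B, M i j

/-!
With `M = !![1/12, 3/12; 3/12, 5/12]` and `N = !![1/16, 3/16; 3/16, 9/16]` we have
`N = (3/4) M + (1/4) E₂₂`. The `E₂₂` term contributes to `Ψ(1_A, 1_B)` exactly when the second
element (index `1 : Fin 2`) lies in both `A` and `B`, which is exactly when `Φ(1_A, 1_B) > 1/3`.
So `Ψ = h ∘ Φ` on indicator pairs, with `h x = (3/4) x + (1/4)·[x > 1/3]` strictly increasing.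
-/

open Matrix

namespace Matrix

variable {m n K : Type*} [Fintype n] [Field K]

theorem rank_pos_of_ne_zero [DecidableEq n] {A : Matrix m n K} (hA : A ≠ 0) : 0 < A.rank := by
  rw [Nat.pos_iff_ne_zero, rank, Ne, Submodule.finrank_eq_zero, LinearMap.range_eq_bot,
    ← toLin'_apply', LinearEquiv.map_eq_zero_iff]
  exact hA

theorem rank_vecMulVec_of_ne_zero [Fintype m] {w : m → K} {v : n → K} (hw : w ≠ 0)
    (hv : v ≠ 0) : (vecMulVec w v).rank = 1 := by
  classical
  refine le_antisymm (rank_vecMulVec_le w v) (rank_pos_of_ne_zero fun h => ?_)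
  obtain ⟨i, hi⟩ := Function.ne_iff.mp hw
  obtain ⟨j, hj⟩ := Function.ne_iff.mp hv
  exact mul_ne_zero hi hj congr($h i j)

end Matrix

theorem strictMono_mul_add_indicator_Ioi {a b t : ℝ} (ha : 0 < a) (hb : 0 ≤ b) :
    StrictMono fun x => a * x + (Set.Ioi t).indicator (fun _ => b) x := by
  intro x y hxy
  have hmul := mul_lt_mul_of_pos_left hxy ha
  simp only [Set.indicator_apply, Set.mem_Ioi]
  split_ifs <;> linarith

theorem bq_add (M N : Matrix (Fin 2) (Fin 2) ℝ) (A B : Finset (Fin 2)) :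
    bq (M + N) A B = bq M A B + bq N A B := by
  simp only [bq, Matrix.add_apply, Finset.sum_add_distrib]

theorem bq_smul (c : ℝ) (M : Matrix (Fin 2) (Fin 2) ℝ) (A B : Finset (Fin 2)) :
    bq (c • M) A B = c * bq M A B := by
  simp only [bq, Matrix.smul_apply, smul_eq_mul, Finset.mul_sum]

theorem bq_single (i j : Fin 2) (c : ℝ) (A B : Finset (Fin 2)) :
    bq (single i j c) A B = if i ∈ A ∧ j ∈ B then c else 0 := by
  simp [bq, single_apply, Finset.sum_ite_eq, ite_and]

theorem rank_twelfths :
    (!![1/12, 3/12; 3/12, 5/12] : Matrix (Fin 2) (Fin 2) ℝ).rank = 2 := by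
  rw [rank_of_isUnit _ ((isUnit_iff_isUnit_det _).2 ?_), Fintype.card_fin]
  norm_num [det_fin_two_of]

theorem sixteenths_eq_vecMulVec :
    (!![1/16, 3/16; 3/16, 9/16] : Matrix (Fin 2) (Fin 2) ℝ) =
      vecMulVec ![1/4, 3/4] ![1/4, 3/4] := by
  ext i j
  fin_cases i <;> fin_cases j <;> norm_num [vecMulVec_apply]

theorem sixteenths_eq_smul_twelfths_add_single :
    (!![1/16, 3/16; 3/16, 9/16] : Matrix (Fin 2) (Fin 2) ℝ) =
      (3/4 : ℝ) • !![1/12, 3/12; 3/12, 5/12] + single 1 1 (1/4) := by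
  ext i j
  fin_cases i <;> fin_cases j <;> norm_num [single_apply]

theorem third_lt_bq_twelfths_iff (A B : Finset (Fin 2)) :
    1/3 < bq !![1/12, 3/12; 3/12, 5/12] A B ↔ 1 ∈ A ∧ 1 ∈ B := by
  fin_cases A <;> fin_cases B <;> norm_num [bq]

theorem bq_sixteenths_eq (A B : Finset (Fin 2)) :
    bq !![1/16, 3/16; 3/16, 9/16] A B =
      3/4 * bq !![1/12, 3/12; 3/12, 5/12] A B +
        (Set.Ioi (1/3)).indicator (fun _ => 1/4) (bq !![1/12, 3/12; 3/12, 5/12] A B) := by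
  rw [sixteenths_eq_smul_twelfths_add_single, bq_add, bq_smul, bq_single]
  simp only [Set.indicator_apply, Set.mem_Ioi, third_lt_bq_twelfths_iff]

theorem stmt_17 :
    (!![1/12, 3/12; 3/12, 5/12] : Matrix (Fin 2) (Fin 2) ℝ).rank = 2 ∧
    (!![1/16, 3/16; 3/16, 9/16] : Matrix (Fin 2) (Fin 2) ℝ).rank = 1 ∧
    ∀ A B C D : Finset (Fin 2),
      (bq !![1/12, 3/12; 3/12, 5/12] C D ≤ bq !![1/12, 3/12; 3/12, 5/12] A B ↔
        bq !![1/16, 3/16; 3/16, 9/16] C D ≤ bq !![1/16, 3/16; 3/16, 9/16] A B) := by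
  refine ⟨rank_twelfths, ?_, fun A B C D => ?_⟩
  · have hu : (![1/4, 3/4] : Fin 2 → ℝ) ≠ 0 := fun h => by simpa using congr_fun h 0
    rw [sixteenths_eq_vecMulVec, rank_vecMulVec_of_ne_zero hu hu]
  · rw [bq_sixteenths_eq, bq_sixteenths_eq]
    exact (strictMono_mul_add_indicator_Ioi (by norm_num) (by norm_num)).le_iff_le.symm
end
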